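/- arXiv:1309.1380 — 5 statements merged into one kernel-verified Lean document; each statement's English description precedes it below -/
import Mathlib

section
/- Suppose θ²d ≠ 1. Then for every k ≥ 0 the conditional variances of the level sums satisfy Var(S_k | σ_ρ = +1) = 4η(1−η)·d^k·((θ²d)^k − 1)/(θ²d − 1) and Var(S̃_k | σ_ρ = +1) = 4·d^k·δ(1−δ) + 4(1−2δ)²·η(1−η)·d^k·((θ²d)^k − 1)/(θ²d − 1). -/
/-! Given `σρ = 1`, the spin at `v` is the product of the edge variables `ε` along the path from
the root to `v`, and `σρ` is independent of all the `ε` and `ζ`, so conditioning may be dropped: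
`E[σ_u σ_v | σρ = 1] = θ ^ |path(u, v)|` and `E[σ_u | σρ = 1] = θ ^ |u|`. Summing the covariances
over pairs of level-`k` vertices and splitting by the first letter (pairs that branch at the root
are uncorrelated) gives `V (k + 1) = d V k + (1 - θ²) d ^ (2k+1) θ ^ (2k)`, solved by the
geometric sum `(1 - θ²) d ^ k ∑_{j<k} (θ² d) ^ j`, and `1 - θ² = 4η(1-η)`. The noise `ζ` scales
the covariance of two distinct vertices by `(1 - 2δ)²` and adds `1 - (1 - 2δ)² = 4δ(1-δ)` on the
diagonal. -/

open MeasureTheory ProbabilityTheory Filter Topology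

namespace BlockModelStmt5

/-- Vertices of the infinite rooted `d`-ary tree: finite strings over `{0, …, d-1}`.
The root is the empty string. -/
abbrev Vertex (d : ℕ) := List (Fin d)

/-- The spin (label) of the broadcast process at a vertex `v`: the root label times the
product of the edge variables `ε w` over all nonempty prefixes `w` of `v`. -/
noncomputable def spin {Ω : Type} {d : ℕ} (σρ : Ω → ℝ) (ε : Vertex d → Ω → ℝ)
    (v : Vertex d) (ω : Ω) : ℝ :=
  σρ ω * ((v.inits.filter (fun w => w ≠ [])).map (fun w => ε w ω)).prod

/-- The noisy spin at a vertex `v`: the spin times the extra noise variable `ζ v`. -/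
noncomputable def nspin {Ω : Type} {d : ℕ} (σρ : Ω → ℝ) (ε ζ : Vertex d → Ω → ℝ)
    (v : Vertex d) (ω : Ω) : ℝ :=
  spin σρ ε v ω * ζ v ω

/-- The σ-algebra generated by the labels `(f v)` for `v` ranging over level `k`
(strings of length `k`). -/
noncomputable def levelAlg {Ω : Type} [MeasurableSpace Ω] {d : ℕ}
    (f : Vertex d → Ω → ℝ) (k : ℕ) : MeasurableSpace Ω :=
  ⨆ v : {v : Vertex d // v.length = k}, MeasurableSpace.comap (f v.1) inferInstance

/-- The sum of the labels `f v` over all vertices `v` at level `k` (strings of length `k`,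
enumerated as functions `Fin k → Fin d` via `List.ofFn`). -/
noncomputable def levelSum {Ω : Type} {d : ℕ} (f : Vertex d → Ω → ℝ) (k : ℕ) (ω : Ω) : ℝ :=
  ∑ g : Fin k → Fin d, f (List.ofFn g) ω

/-- The hypotheses of the broadcast process with parameter `η` and noise `δ` on the infinite
rooted `d`-ary tree: `σρ` is uniform on `{-1,+1}`, the `ε v` (for nonempty `v`) are `±1`-valued
with `P(ε v = 1) = 1 - η`, the `ζ v` are `±1`-valued with `P(ζ v = 1) = 1 - δ`, and `σρ`
together with all the `ε v` (nonempty `v`) and `ζ v` are jointly independent. -/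
structure Setup {Ω : Type} [MeasurableSpace Ω] (μ : Measure Ω) (d : ℕ) (η δ : ℝ)
    (σρ : Ω → ℝ) (ε ζ : Vertex d → Ω → ℝ) : Prop where
  meas_root : Measurable σρ
  meas_ε : ∀ v, Measurable (ε v)
  meas_ζ : ∀ v, Measurable (ζ v)
  root_pm : ∀ ω, σρ ω = 1 ∨ σρ ω = -1
  root_unif : μ {ω | σρ ω = 1} = 1/2
  ε_pm : ∀ v, v ≠ ([] : Vertex d) → ∀ ω, ε v ω = 1 ∨ ε v ω = -1
  ε_prob : ∀ v, v ≠ ([] : Vertex d) → μ {ω | ε v ω = 1} = ENNReal.ofReal (1 - η)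
  ζ_pm : ∀ v ω, ζ v ω = 1 ∨ ζ v ω = -1
  ζ_prob : ∀ v, μ {ω | ζ v ω = 1} = ENNReal.ofReal (1 - δ)
  indep : iIndepFun
    (fun i : Unit ⊕ {v : Vertex d // v ≠ []} ⊕ Vertex d =>
      Sum.elim (fun _ => σρ) (Sum.elim (fun v => ε v.1) ζ) i) μ

end BlockModelStmt5

open scoped symmDiff
open Finset

namespace Finset

theorem prod_mul_prod_eq_prod_symmDiff {ι M : Type*} [DecidableEq ι] [CommMonoid M]
    {s t : Finset ι} {f : ι → M} (hf : ∀ i ∈ s ∩ t, f i * f i = 1) :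
    (∏ i ∈ s, f i) * ∏ i ∈ t, f i = ∏ i ∈ s ∆ t, f i := by
  rw [← prod_inter_mul_prod_sdiff s t, ← prod_inter_mul_prod_sdiff t s, symmDiff_def, sup_eq_union,
    prod_union disjoint_sdiff_sdiff, inter_comm t s, mul_mul_mul_comm, ← prod_mul_distrib,
    prod_eq_one hf, one_mul]

theorem card_singleton_symmDiff_singleton {ι : Type*} [DecidableEq ι] {a b : ι} (h : a ≠ b) :
    #({a} ∆ {b} : Finset ι) = 2 := by
  have hdisj := disjoint_singleton.2 h
  rw [hdisj.symmDiff_eq_sup, sup_eq_union, card_union_of_disjoint hdisj, card_singleton,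
    card_singleton]

end Finset

namespace ProbabilityTheory

variable {Ω : Type*} [MeasurableSpace Ω] {μ : Measure Ω}

lemma integral_eq_two_mul_measureReal_sub_one [IsProbabilityMeasure μ] {X : Ω → ℝ}
    (hX : Measurable X) (hpm : ∀ ω, X ω = 1 ∨ X ω = -1) :
    ∫ ω, X ω ∂μ = 2 * μ.real {ω | X ω = 1} - 1 := by
  have hA : MeasurableSet {ω | X ω = 1} := hX (measurableSet_singleton 1)
  have hX_eq : ∀ ω, X ω = 2 * {ω | X ω = 1}.indicator 1 ω - 1 := fun ω => by
    rcases hpm ω with h | h <;> norm_num [Set.indicator, h]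
  rw [integral_congr_ae (ae_of_all _ hX_eq), integral_sub ((integrable_indicator_iff hA).2
      (integrable_const 1).integrableOn |>.const_mul 2) (integrable_const 1),
    integral_const_mul, integral_indicator_one hA]
  simp

lemma iIndepFun.integral_finset_prod {ι : Type*} {X : ι → Ω → ℝ} (h : iIndepFun X μ)
    (hX : ∀ i, AEStronglyMeasurable (X i) μ) (s : Finset ι) :
    ∫ ω, ∏ i ∈ s, X i ω ∂μ = ∏ i ∈ s, ∫ ω, X i ω ∂μ := by
  rw [← Finset.prod_coe_sort s]
  simp_rw [← Finset.prod_coe_sort s (fun i => X i _)]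
  exact (h.precomp Subtype.val_injective).integral_fun_prod_eq_prod_integral fun i => hX i

lemma IndepFun.integral_cond_preimage [IsFiniteMeasure μ] {β : Type*} [MeasurableSpace β]
    {X : Ω → β} {Y : Ω → ℝ} (h : IndepFun X Y μ) (hX : Measurable X) (hY : AEMeasurable Y μ)
    {s : Set β} (hs : MeasurableSet s) (hμs : μ (X ⁻¹' s) ≠ 0) :
    ∫ ω, Y ω ∂μ[|X ⁻¹' s] = ∫ ω, Y ω ∂μ := by
  have hset : ∫ ω in X ⁻¹' s, Y ω ∂μ = μ.real (X ⁻¹' s) * ∫ ω, Y ω ∂μ :=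
    ((IndepFun_iff_Indep _ _ _).mp h).setIntegral_eq_mul hX.comap_le hY ⟨s, hs, rfl⟩
      (f := id) aestronglyMeasurable_id
  rw [cond, integral_smul_measure, hset, smul_eq_mul, ← mul_assoc, ENNReal.toReal_inv,
    ← measureReal_def, inv_mul_cancel₀ ((measureReal_ne_zero_iff (measure_ne_top _ _)).2 hμs),
    one_mul]

end ProbabilityTheory

theorem List.nodup_inits {α : Type*} : ∀ l : List α, l.inits.Nodup
  | [] => by simp
  | a :: l => by
    rw [List.inits_cons]
    exact List.nodup_cons.2 ⟨by simp, (List.nodup_inits l).map List.cons_injective⟩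

namespace BlockModelStmt5

section Tree

variable {d : ℕ}

def prefs (v : Vertex d) : Finset (Vertex d) := (v.inits.filter (fun w => w ≠ [])).toFinset

lemma spin_eq_mul_prod_prefs {Ω : Type} (σρ : Ω → ℝ) (ε : Vertex d → Ω → ℝ) (v : Vertex d)
    (ω : Ω) :
    spin σρ ε v ω = σρ ω * ∏ w ∈ prefs v, ε w ω := by
  rw [spin, prefs, List.prod_toFinset _ ((List.nodup_inits v).filter _)]

lemma ne_nil_of_mem_prefs {v w : Vertex d} (h : w ∈ prefs v) : w ≠ [] := by
  simp_all [prefs]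

lemma prefs_cons (a : Fin d) (v : Vertex d) :
    prefs (a :: v) = (insert [] (prefs v)).image (a :: ·) := by
  ext w
  simp only [prefs, List.mem_toFinset, List.mem_filter, List.mem_inits, List.prefix_cons_iff,
    mem_image, mem_insert, decide_eq_true_eq]
  grind

lemma nil_notMem_prefs (v : Vertex d) : [] ∉ prefs v := fun h => ne_nil_of_mem_prefs h rfl

lemma ne_nil_of_mem_prefs_symmDiff {u v w : Vertex d} (h : w ∈ prefs u ∆ prefs v) : w ≠ [] := by
  rcases mem_symmDiff.1 h with ⟨h, -⟩ | ⟨h, -⟩ <;> exact ne_nil_of_mem_prefs h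

lemma card_prefs : ∀ v : Vertex d, #(prefs v) = v.length
  | [] => rfl
  | a :: v => by
    rw [prefs_cons, card_image_of_injective _ List.cons_injective,
      card_insert_of_notMem (nil_notMem_prefs v), card_prefs v, List.length_cons]

lemma prefs_cons_symmDiff_prefs_cons (a : Fin d) (u v : Vertex d) :
    prefs (a :: u) ∆ prefs (a :: v) = (prefs u ∆ prefs v).image (a :: ·) := by
  rw [prefs_cons, prefs_cons, ← image_symmDiff _ _ List.cons_injective]
  congr 1
  ext w
  by_cases hw : w = [] <;> simp [mem_symmDiff, hw, nil_notMem_prefs]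

lemma card_prefs_cons_symmDiff_prefs_cons_of_ne {a b : Fin d} (hab : a ≠ b) (u v : Vertex d) :
    #(prefs (a :: u) ∆ prefs (b :: v)) = u.length + v.length + 2 := by
  have hdisj : Disjoint (prefs (a :: u)) (prefs (b :: v)) := by
    simp_rw [prefs_cons, disjoint_left, mem_image]
    rintro _ ⟨w, -, rfl⟩ ⟨w', -, h⟩
    exact hab (List.cons_eq_cons.mp h).1.symm
  rw [hdisj.symmDiff_eq_sup, sup_eq_union, card_union_of_disjoint hdisj, card_prefs,
    card_prefs, List.length_cons, List.length_cons]
  ring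

lemma sum_ofFn_succ {M : Type*} [AddCommMonoid M] (k : ℕ) (f : Vertex d → M) :
    ∑ g : Fin (k + 1) → Fin d, f (List.ofFn g)
      = ∑ a, ∑ g : Fin k → Fin d, f (a :: List.ofFn g) := by
  rw [← (Fin.consEquiv fun _ => Fin d).sum_comp, Fintype.sum_prod_type]
  simp [Fin.consEquiv, List.ofFn_succ]

lemma sum_sum_ofFn_succ {M : Type*} [AddCommMonoid M] (k : ℕ) (f : Vertex d → Vertex d → M) :
    ∑ g : Fin (k + 1) → Fin d, ∑ h : Fin (k + 1) → Fin d, f (List.ofFn g) (List.ofFn h)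
      = ∑ a, ∑ g : Fin k → Fin d, ∑ b, ∑ h : Fin k → Fin d,
          f (a :: List.ofFn g) (b :: List.ofFn h) := by
  rw [sum_ofFn_succ k (fun u => ∑ h : Fin (k + 1) → Fin d, f u (List.ofFn h))]
  simp only [sum_ofFn_succ k (f _)]

/-- `prefs u ∆ prefs v` is the set of edges on the path from `u` to `v`, so for `|u| = |v| = k`
the summand is the covariance of `σ_u` and `σ_v` given the root. -/
noncomputable def levelCovSum (d : ℕ) (θ : ℝ) (k : ℕ) : ℝ :=
  ∑ g : Fin k → Fin d, ∑ h : Fin k → Fin d,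
    (θ ^ #(prefs (List.ofFn g) ∆ prefs (List.ofFn h)) - θ ^ (2 * k))

lemma levelCovSum_succ (θ : ℝ) (k : ℕ) :
    levelCovSum d θ (k + 1)
      = d * (levelCovSum d θ k + (1 - θ ^ 2) * d ^ (2 * k) * θ ^ (2 * k)) := by
  have hterm : ∀ (a b : Fin d) (g h : Fin k → Fin d),
      θ ^ #(prefs (a :: List.ofFn g) ∆ prefs (b :: List.ofFn h)) - θ ^ (2 * (k + 1))
        = if a = b then θ ^ #(prefs (List.ofFn g) ∆ prefs (List.ofFn h)) - θ ^ (2 * (k + 1))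
          else 0 := by
    intro a b g h
    split_ifs with hab
    · rw [hab, prefs_cons_symmDiff_prefs_cons, card_image_of_injective _ List.cons_injective]
    · rw [card_prefs_cons_symmDiff_prefs_cons_of_ne hab, List.length_ofFn, List.length_ofFn]
      ring_nf
  rw [levelCovSum, sum_sum_ofFn_succ k
    (fun u v => θ ^ #(prefs u ∆ prefs v) - θ ^ (2 * (k + 1)))]
  simp only [levelCovSum, hterm, sum_ite_irrel, sum_const_zero, sum_ite_eq, mem_univ, if_true,
    sum_const, card_univ, Fintype.card_fin, nsmul_eq_mul, sum_sub_distrib, Fintype.card_fun]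
  push_cast
  ring

lemma levelCovSum_eq_geom_sum (θ : ℝ) (k : ℕ) :
    levelCovSum d θ k = (1 - θ ^ 2) * d ^ k * ∑ j ∈ range k, (θ ^ 2 * d) ^ j := by
  induction k with
  | zero => simp [levelCovSum]
  | succ k ih =>
    rw [levelCovSum_succ, ih, sum_range_succ]
    ring

end Tree

namespace Setup

variable {Ω : Type} [MeasurableSpace Ω] {μ : Measure Ω} {d : ℕ} {η δ : ℝ} {σρ : Ω → ℝ}
  {ε ζ : Vertex d → Ω → ℝ}

lemma abs_spin (S : Setup μ d η δ σρ ε ζ) (v : Vertex d) (ω : Ω) : |spin σρ ε v ω| = 1 := by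
  rw [spin_eq_mul_prod_prefs, abs_mul, Finset.abs_prod, (abs_eq zero_le_one).2 (S.root_pm ω),
    Finset.prod_eq_one fun w hw => (abs_eq zero_le_one).2 (S.ε_pm w (ne_nil_of_mem_prefs hw) ω),
    one_mul]

lemma abs_nspin (S : Setup μ d η δ σρ ε ζ) (v : Vertex d) (ω : Ω) : |nspin σρ ε ζ v ω| = 1 := by
  rw [nspin, abs_mul, S.abs_spin, (abs_eq zero_le_one).2 (S.ζ_pm v ω), one_mul]

lemma measurable_spin (S : Setup μ d η δ σρ ε ζ) (v : Vertex d) : Measurable (spin σρ ε v) := by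
  rw [funext (spin_eq_mul_prod_prefs σρ ε v)]
  exact S.meas_root.mul (Finset.measurable_prod _ fun w _ => S.meas_ε w)

lemma measurable_nspin (S : Setup μ d η δ σρ ε ζ) (v : Vertex d) :
    Measurable (nspin σρ ε ζ v) :=
  (S.measurable_spin v).mul (S.meas_ζ v)

lemma memLp_spin (S : Setup μ d η δ σρ ε ζ) (ν : Measure Ω) [IsFiniteMeasure ν] (v : Vertex d) :
    MemLp (spin σρ ε v) 2 ν :=
  .of_bound (S.measurable_spin v).aestronglyMeasurable 1
    (ae_of_all _ fun ω => (S.abs_spin v ω).le)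

lemma memLp_nspin (S : Setup μ d η δ σρ ε ζ) (ν : Measure Ω) [IsFiniteMeasure ν] (v : Vertex d) :
    MemLp (nspin σρ ε ζ v) 2 ν :=
  .of_bound (S.measurable_nspin v).aestronglyMeasurable 1
    (ae_of_all _ fun ω => (S.abs_nspin v ω).le)

lemma spin_mul_spin (S : Setup μ d η δ σρ ε ζ) (u v : Vertex d) (ω : Ω) :
    spin σρ ε u ω * spin σρ ε v ω = ∏ w ∈ prefs u ∆ prefs v, ε w ω := by
  have hroot : σρ ω * σρ ω = 1 := by rcases S.root_pm ω with h | h <;> simp [h]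
  rw [spin_eq_mul_prod_prefs, spin_eq_mul_prod_prefs, mul_mul_mul_comm, hroot, one_mul,
    prod_mul_prod_eq_prod_symmDiff fun w hw => ?_]
  rcases S.ε_pm w (ne_nil_of_mem_prefs (mem_inter.1 hw).1) ω with h | h <;> simp [h]

lemma nspin_mul_nspin (S : Setup μ d η δ σρ ε ζ) (u v : Vertex d) (ω : Ω) :
    nspin σρ ε ζ u ω * nspin σρ ε ζ v ω
      = (∏ w ∈ prefs u ∆ prefs v, ε w ω) * ∏ w ∈ {u} ∆ {v}, ζ w ω := by
  rw [nspin, nspin, mul_mul_mul_comm, S.spin_mul_spin, ← prod_singleton (ζ · ω) u,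
    ← prod_singleton (ζ · ω) v, prod_mul_prod_eq_prod_symmDiff fun w _ => ?_]
  rcases S.ζ_pm w ω with h | h <;> simp [h]

lemma measure_root_eq_one_ne_zero (S : Setup μ d η δ σρ ε ζ) : μ {ω | σρ ω = 1} ≠ 0 := by
  simp [S.root_unif]

lemma isProbabilityMeasure_cond [IsFiniteMeasure μ] (S : Setup μ d η δ σρ ε ζ) :
    IsProbabilityMeasure μ[|{ω | σρ ω = 1}] :=
  cond_isProbabilityMeasure S.measure_root_eq_one_ne_zero

lemma integral_ε [IsProbabilityMeasure μ] (S : Setup μ d η δ σρ ε ζ) (hη : η ≤ 1) {v : Vertex d}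
    (hv : v ≠ []) : ∫ ω, ε v ω ∂μ = 1 - 2 * η := by
  rw [integral_eq_two_mul_measureReal_sub_one (S.meas_ε v) (S.ε_pm v hv), measureReal_def,
    S.ε_prob v hv, ENNReal.toReal_ofReal (by linarith)]
  ring

lemma integral_ζ [IsProbabilityMeasure μ] (S : Setup μ d η δ σρ ε ζ) (hδ : δ ≤ 1) (v : Vertex d) :
    ∫ ω, ζ v ω ∂μ = 1 - 2 * δ := by
  rw [integral_eq_two_mul_measureReal_sub_one (S.meas_ζ v) (S.ζ_pm v), measureReal_def,
    S.ζ_prob v, ENNReal.toReal_ofReal (by linarith)]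
  ring

lemma integral_cond_prod_mul_prod [IsProbabilityMeasure μ] (S : Setup μ d η δ σρ ε ζ)
    (hη : η ≤ 1) (hδ : δ ≤ 1) {s : Finset (Vertex d)} (hs : ∀ w ∈ s, w ≠ [])
    (t : Finset (Vertex d)) :
    ∫ ω, (∏ w ∈ s, ε w ω) * ∏ w ∈ t, ζ w ω ∂μ[|{ω | σρ ω = 1}]
      = (1 - 2 * η) ^ #s * (1 - 2 * δ) ^ #t := by
  set X := fun i : Unit ⊕ {v : Vertex d // v ≠ []} ⊕ Vertex d =>
    Sum.elim (fun _ => σρ) (Sum.elim (fun v => ε v.1) ζ) i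
  set F := ((s.subtype (· ≠ [])).disjSum t).map Function.Embedding.inr
  have hX : ∀ i, Measurable (X i) := by
    rintro (_ | v | v)
    exacts [S.meas_root, S.meas_ε _, S.meas_ζ _]
  have hprod : ∀ ω, (∏ w ∈ s, ε w ω) * ∏ w ∈ t, ζ w ω = ∏ i ∈ F, X i ω := by
    intro ω
    simp only [F, X, prod_map, prod_disjSum, Function.Embedding.inr_apply, Sum.elim_inr,
      Sum.elim_inl]
    rw [prod_subtype_eq_prod_filter (fun w => ε w ω), filter_true_of_mem hs]
  -- `F` avoids the root index, so conditioning on `σρ` does not affect the product.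
  have hindep : IndepFun σρ (fun ω => ∏ i ∈ F, X i ω) μ := by
    have := (S.indep.indepFun_finsetProd_of_notMem hX (i := Sum.inl ()) (s := F) (by simp [F])).symm
    simpa [Finset.prod_fn] using this
  simp_rw [hprod]
  rw [show {ω | σρ ω = 1} = σρ ⁻¹' {1} from rfl,
    hindep.integral_cond_preimage S.meas_root (by fun_prop) (measurableSet_singleton 1)
      S.measure_root_eq_one_ne_zero,
    S.indep.integral_finset_prod (fun i => (hX i).aestronglyMeasurable)]
  simp only [F, prod_map, prod_disjSum, Function.Embedding.inr_apply, Sum.elim_inr, Sum.elim_inl]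
  rw [prod_congr rfl fun w _ => S.integral_ε hη w.2, prod_congr rfl fun w _ => S.integral_ζ hδ w,
    prod_const, prod_const, card_subtype, filter_true_of_mem hs]

lemma integral_cond_prod [IsProbabilityMeasure μ] (S : Setup μ d η δ σρ ε ζ) (hη : η ≤ 1)
    (hδ : δ ≤ 1) {s : Finset (Vertex d)} (hs : ∀ w ∈ s, w ≠ []) :
    ∫ ω, ∏ w ∈ s, ε w ω ∂μ[|{ω | σρ ω = 1}] = (1 - 2 * η) ^ #s := by
  simpa using S.integral_cond_prod_mul_prod hη hδ hs ∅

lemma ae_cond_root_eq_one (S : Setup μ d η δ σρ ε ζ) : ∀ᵐ ω ∂μ[|{ω | σρ ω = 1}], σρ ω = 1 :=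
  ae_cond_mem (S.meas_root (measurableSet_singleton 1))

lemma integral_cond_spin [IsProbabilityMeasure μ] (S : Setup μ d η δ σρ ε ζ) (hη : η ≤ 1)
    (hδ : δ ≤ 1) (v : Vertex d) :
    ∫ ω, spin σρ ε v ω ∂μ[|{ω | σρ ω = 1}] = (1 - 2 * η) ^ v.length := by
  rw [← card_prefs, ← S.integral_cond_prod hη hδ fun _ => ne_nil_of_mem_prefs]
  refine integral_congr_ae ?_
  filter_upwards [S.ae_cond_root_eq_one] with ω hω
  rw [spin_eq_mul_prod_prefs, hω, one_mul]

lemma integral_cond_nspin [IsProbabilityMeasure μ] (S : Setup μ d η δ σρ ε ζ) (hη : η ≤ 1)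
    (hδ : δ ≤ 1) (v : Vertex d) :
    ∫ ω, nspin σρ ε ζ v ω ∂μ[|{ω | σρ ω = 1}] = (1 - 2 * η) ^ v.length * (1 - 2 * δ) := by
  have h := S.integral_cond_prod_mul_prod hη hδ (s := prefs v) (fun _ => ne_nil_of_mem_prefs) {v}
  rw [card_prefs, card_singleton, pow_one] at h
  rw [← h]
  refine integral_congr_ae ?_
  filter_upwards [S.ae_cond_root_eq_one] with ω hω
  rw [nspin, spin_eq_mul_prod_prefs, hω, one_mul, prod_singleton]

lemma covariance_cond_spin [IsProbabilityMeasure μ] (S : Setup μ d η δ σρ ε ζ) (hη : η ≤ 1)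
    (hδ : δ ≤ 1) (u v : Vertex d) :
    cov[spin σρ ε u, spin σρ ε v; μ[|{ω | σρ ω = 1}]]
      = (1 - 2 * η) ^ #(prefs u ∆ prefs v) - (1 - 2 * η) ^ (u.length + v.length) := by
  have := S.isProbabilityMeasure_cond
  rw [covariance_eq_sub (S.memLp_spin _ u) (S.memLp_spin _ v)]
  simp only [Pi.mul_apply, S.spin_mul_spin]
  rw [S.integral_cond_prod hη hδ fun _ => ne_nil_of_mem_prefs_symmDiff,
    S.integral_cond_spin hη hδ, S.integral_cond_spin hη hδ, pow_add]

lemma covariance_cond_nspin [IsProbabilityMeasure μ] (S : Setup μ d η δ σρ ε ζ) (hη : η ≤ 1)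
    (hδ : δ ≤ 1) (u v : Vertex d) :
    cov[nspin σρ ε ζ u, nspin σρ ε ζ v; μ[|{ω | σρ ω = 1}]]
      = (1 - 2 * δ) ^ 2 * cov[spin σρ ε u, spin σρ ε v; μ[|{ω | σρ ω = 1}]]
        + if u = v then 1 - (1 - 2 * δ) ^ 2 else 0 := by
  have := S.isProbabilityMeasure_cond
  rw [covariance_eq_sub (S.memLp_nspin _ u) (S.memLp_nspin _ v), S.covariance_cond_spin hη hδ]
  simp only [Pi.mul_apply, S.nspin_mul_nspin]
  rw [S.integral_cond_prod_mul_prod hη hδ (fun _ => ne_nil_of_mem_prefs_symmDiff),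
    S.integral_cond_nspin hη hδ, S.integral_cond_nspin hη hδ]
  split_ifs with huv
  · subst huv
    simp only [symmDiff_self, bot_eq_empty, card_empty, pow_zero, mul_one]
    ring
  · rw [card_singleton_symmDiff_singleton huv]
    ring

lemma variance_cond_levelSum_spin [IsProbabilityMeasure μ] (S : Setup μ d η δ σρ ε ζ)
    (hη : η ≤ 1) (hδ : δ ≤ 1) (k : ℕ) :
    Var[levelSum (spin σρ ε) k; μ[|{ω | σρ ω = 1}]] = levelCovSum d (1 - 2 * η) k := by
  have := S.isProbabilityMeasure_cond
  unfold levelSum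
  rw [variance_fun_sum fun g => S.memLp_spin _ (List.ofFn g)]
  simp only [S.covariance_cond_spin hη hδ, List.length_ofFn, levelCovSum, two_mul]

lemma variance_cond_levelSum_nspin [IsProbabilityMeasure μ] (S : Setup μ d η δ σρ ε ζ)
    (hη : η ≤ 1) (hδ : δ ≤ 1) (k : ℕ) :
    Var[levelSum (nspin σρ ε ζ) k; μ[|{ω | σρ ω = 1}]]
      = (1 - 2 * δ) ^ 2 * levelCovSum d (1 - 2 * η) k + d ^ k * (1 - (1 - 2 * δ) ^ 2) := by
  have := S.isProbabilityMeasure_cond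
  rw [← S.variance_cond_levelSum_spin hη hδ]
  unfold levelSum
  rw [variance_fun_sum fun g => S.memLp_nspin _ (List.ofFn g),
    variance_fun_sum fun g => S.memLp_spin _ (List.ofFn g)]
  simp only [S.covariance_cond_nspin hη hδ, List.ofFn_inj, sum_add_distrib, mul_sum, sum_ite_eq,
    mem_univ, if_true, sum_const, card_univ, Fintype.card_fun, Fintype.card_fin, nsmul_eq_mul,
    Nat.cast_pow]

end Setup

/-- if `θ²d ≠ 1` then for every `k ≥ 0`,
`Var(S_k | σρ = +1) = 4η(1-η)·d^k·((θ²d)^k - 1)/(θ²d - 1)` and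
`Var(S̃_k | σρ = +1) = 4·d^k·δ(1-δ) + 4(1-2δ)²·η(1-η)·d^k·((θ²d)^k - 1)/(θ²d - 1)`,
where `θ = 1 - 2η`. -/
theorem levelSum_variance :
    ∀ (d : ℕ), 2 ≤ d → ∀ η δ : ℝ, η ∈ Set.Ioo (0:ℝ) (1/2) → δ ∈ Set.Ico (0:ℝ) (1/2) →
    (1 - 2*η)^2 * d ≠ 1 →
    ∀ (Ω : Type) (_ : MeasurableSpace Ω) (μ : Measure Ω), IsProbabilityMeasure μ →
    ∀ (σρ : Ω → ℝ) (ε ζ : Vertex d → Ω → ℝ), Setup μ d η δ σρ ε ζ →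
    ∀ k : ℕ,
      (variance (levelSum (spin σρ ε) k) (μ[|{ω | σρ ω = 1}])
        = 4*η*(1-η) * (d:ℝ)^k * (((1 - 2*η)^2 * d)^k - 1) / ((1 - 2*η)^2 * d - 1)) ∧
      (variance (levelSum (nspin σρ ε ζ) k) (μ[|{ω | σρ ω = 1}])
        = 4 * (d:ℝ)^k * δ * (1-δ)
          + 4*(1 - 2*δ)^2 * η*(1-η) * (d:ℝ)^k
            * (((1 - 2*η)^2 * d)^k - 1) / ((1 - 2*η)^2 * d - 1)) := by
  intro d _ η δ hη hδ hθ Ω _ μ _ σρ ε ζ S k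
  have hη1 : η ≤ 1 := by linarith [hη.2]
  have hδ1 : δ ≤ 1 := by linarith [hδ.2]
  have hcov : levelCovSum d (1 - 2 * η) k
      = 4 * η * (1 - η) * d ^ k * (((1 - 2 * η) ^ 2 * d) ^ k - 1) / ((1 - 2 * η) ^ 2 * d - 1) := by
    rw [levelCovSum_eq_geom_sum, geom_sum_eq hθ]
    ring
  rw [S.variance_cond_levelSum_spin hη1 hδ1, S.variance_cond_levelSum_nspin hη1 hδ1, hcov]
  constructor <;> ring

end BlockModelStmt5
end

section
/- For every p with 0 < p < 1 and all real x, y ≥ 0, one has |1/(1+x) − 1/(1+y)| ≤ (1/p)·|x^p − y^p|. -/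
/-- for every `p` with `0 < p < 1` and all real `x, y ≥ 0`,
`|1/(1+x) - 1/(1+y)| ≤ (1/p)·|x^p - y^p|`, where `x^p` denotes the real power. -/
theorem inv_one_add_diff_le_rpow_diff :
    ∀ p : ℝ, 0 < p → p < 1 → ∀ x y : ℝ, 0 ≤ x → 0 ≤ y →
      |1 / (1 + x) - 1 / (1 + y)| ≤ (1 / p) * |x ^ p - y ^ p| := by
  intro p hp hp1 x y hx hy
  wlog hxy : x ≤ y with H
  · rw [abs_sub_comm, abs_sub_comm (x ^ p)]
    exact H p hp hp1 y x hy hx (le_of_not_ge hxy)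
  rcases eq_or_lt_of_le hy with h0 | hypos
  · have hx0 : x = 0 := le_antisymm (h0 ▸ hxy) hx
    simp [hx0, ← h0]
  -- y > 0 case
  have h1x : (0:ℝ) < 1 + x := by linarith
  have h1y : (0:ℝ) < 1 + y := by linarith
  have ha : (0:ℝ) < y ^ (p - 1) := Real.rpow_pos_of_pos hypos _
  have hb : (0:ℝ) < y ^ (1 - p) := Real.rpow_pos_of_pos hypos _
  -- weighted AM-GM: x^p ≤ p * (x * y^(p-1)) + (1-p) * y^p
  have k1 : x ^ p ≤ p * (x * y ^ (p - 1)) + (1 - p) * y ^ p := by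
    have hgm := Real.geom_mean_le_arith_mean2_weighted hp.le (by linarith : (0:ℝ) ≤ 1 - p)
      (mul_nonneg hx ha.le) (Real.rpow_nonneg hy p) (by ring)
    calc x ^ p = (x * y ^ (p - 1)) ^ p * (y ^ p) ^ (1 - p) := by
          rw [Real.mul_rpow hx ha.le, ← Real.rpow_mul hy, ← Real.rpow_mul hy, mul_assoc,
            ← Real.rpow_add hypos, show (p - 1) * p + p * (1 - p) = 0 by ring,
            Real.rpow_zero, mul_one]
      _ ≤ p * (x * y ^ (p - 1)) + (1 - p) * y ^ p := hgm
  have k2 : y ^ p = y ^ (p - 1) * y := by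
    rw [← Real.rpow_add_one (ne_of_gt hypos)]
    norm_num
  have k3 : y ^ (p - 1) * y ^ (1 - p) = 1 := by
    rw [← Real.rpow_add hypos]; norm_num
  have k4 : y ^ (1 - p) ≤ 1 + y := by
    rcases le_total y 1 with h | h
    · have : y ^ (1 - p) ≤ 1 := Real.rpow_le_one hy h (by linarith)
      linarith
    · have : y ^ (1 - p) ≤ y ^ (1:ℝ) := Real.rpow_le_rpow_of_exponent_le h (by linarith)
      rw [Real.rpow_one] at this; linarith
  -- concavity consequence
  have goal2 : (y - x) * y ^ (p - 1) * p ≤ y ^ p - x ^ p := by nlinarith [k1, k2]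
  have goal3 : (y - x) / ((1 + x) * (1 + y)) ≤ (y - x) * y ^ (p - 1) := by
    rw [div_le_iff₀ (by positivity)]
    have h5 : y ^ (1 - p) ≤ (1 + x) * (1 + y) := by nlinarith
    nlinarith [mul_le_mul_of_nonneg_left h5 (mul_nonneg (by linarith : (0:ℝ) ≤ y - x) ha.le)]
  have habs1 : |1 / (1 + x) - 1 / (1 + y)| = (y - x) / ((1 + x) * (1 + y)) := by
    rw [div_sub_div _ _ (ne_of_gt h1x) (ne_of_gt h1y)]
    rw [abs_of_nonneg (div_nonneg (by linarith) (by positivity))]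
    ring_nf
  have hxyp : x ^ p ≤ y ^ p := Real.rpow_le_rpow hx hxy hp.le
  have habs2 : |x ^ p - y ^ p| = y ^ p - x ^ p := by
    rw [abs_sub_comm, abs_of_nonneg (by linarith)]
  rw [habs1, habs2]
  calc (y - x) / ((1 + x) * (1 + y)) ≤ (y - x) * y ^ (p - 1) := goal3
    _ ≤ (1 / p) * (y ^ p - x ^ p) := by
        rw [one_div, inv_mul_eq_div, le_div_iff₀ hp]
        linarith
end

section
/- Let d ≥ 2 be an integer and let (A_1,B_1), …, (A_d,B_d) be i.i.d. copies of a pair (A,B) of bounded real random variables. Set m = max{E[A²], E[B²]}. Then E[(∏_{i=1}^d A_i − ∏_{i=1}^d B_i)²] ≤ d²·m^{d−2}·(E[A²] − E[B²])² + 2d·m^{d−1}·E[(A−B)²]. -/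
/-!
Expanding the square, independence and identical distribution give
`E[(∏ Aᵢ - ∏ Bᵢ)²] = a^d + b^d - 2 c^d` with `a = E[A²]`, `b = E[B²]`, `c = E[AB]`,
and `2|c| ≤ a + b`. What remains is an inequality between real numbers: for `b ≤ a`,
`a^d + b^d - 2c^d = 2(a^d - c^d) - (a^d - b^d)`, and both differences are controlled by
the mean value bounds `n y^(n-1) (x - y) ≤ x^n - y^n ≤ n x^(n-1) (x - y)`.
-/

open MeasureTheory ProbabilityTheory Finset

lemma pow_sub_pow_le_of_abs_le {x y : ℝ} (hy : |y| ≤ x) (n : ℕ) :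
    x ^ n - y ^ n ≤ n * x ^ (n - 1) * (x - y) := by
  have hx : |x| = x := abs_of_nonneg ((abs_nonneg y).trans hy)
  have hxy : |x - y| = x - y := abs_of_nonneg (by linarith [le_abs_self y])
  calc x ^ n - y ^ n ≤ |x ^ n - y ^ n| := le_abs_self _
    _ ≤ |x - y| * n * max |x| |y| ^ (n - 1) := abs_pow_sub_pow_le x y n
    _ = n * x ^ (n - 1) * (x - y) := by rw [hxy, hx, max_eq_left hy]; ring

lemma pow_add_pow_sub_two_mul_pow_le_of_le {a b c : ℝ} (hb : 0 ≤ b) (hba : b ≤ a)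
    (hc : 2 * |c| ≤ a + b) (d : ℕ) :
    a ^ d + b ^ d - 2 * c ^ d
      ≤ (d : ℝ) ^ 2 * a ^ (d - 2) * (a - b) ^ 2 + 2 * d * a ^ (d - 1) * (a + b - 2 * c) := by
  have ha : 0 ≤ a := hb.trans hba
  have hab : 0 ≤ a - b := sub_nonneg.2 hba
  have habc : 0 ≤ a + b - 2 * c := by linarith [le_abs_self c]
  have hsub_c : a ^ d - c ^ d ≤ d * a ^ (d - 1) * (a - c) :=
    pow_sub_pow_le_of_abs_le (by linarith) d
  have hsub_b : b ^ d + d * b ^ (d - 1) * (a - b) ≤ a ^ d := by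
    simpa using pow_add_mul_le_add_pow hb (by linarith : 0 ≤ 2 * b + (a - b)) d
  have hsub_pred : a ^ (d - 1) - b ^ (d - 1) ≤ d * a ^ (d - 2) * (a - b) := by
    have h := pow_sub_pow_le_of_abs_le ((abs_of_nonneg hb).trans_le hba) (d - 1)
    rw [Nat.sub_sub] at h
    refine h.trans (mul_le_mul_of_nonneg_right (mul_le_mul_of_nonneg_right ?_ ?_) hab)
    · exact Nat.cast_le.mpr (Nat.sub_le d 1)
    · exact pow_nonneg ha _
  calc a ^ d + b ^ d - 2 * c ^ d ≤ 2 * (d * a ^ (d - 1) * (a - c)) - d * b ^ (d - 1) * (a - b) := by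
        linarith
    _ = d * (a - b) * (a ^ (d - 1) - b ^ (d - 1)) + d * a ^ (d - 1) * (a + b - 2 * c) := by ring
    _ ≤ d * (a - b) * (d * a ^ (d - 2) * (a - b)) + 2 * d * a ^ (d - 1) * (a + b - 2 * c) := by
        gcongr ?_ + ?_
        · exact mul_le_mul_of_nonneg_left hsub_pred (by positivity)
        · have : 0 ≤ (d : ℝ) * a ^ (d - 1) * (a + b - 2 * c) := by positivity
          linarith
    _ = (d : ℝ) ^ 2 * a ^ (d - 2) * (a - b) ^ 2 + 2 * d * a ^ (d - 1) * (a + b - 2 * c) := by ring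

lemma pow_add_pow_sub_two_mul_pow_le {a b c : ℝ} (ha : 0 ≤ a) (hb : 0 ≤ b)
    (hc : 2 * |c| ≤ a + b) (d : ℕ) :
    a ^ d + b ^ d - 2 * c ^ d
      ≤ (d : ℝ) ^ 2 * max a b ^ (d - 2) * (a - b) ^ 2
        + 2 * d * max a b ^ (d - 1) * (a + b - 2 * c) := by
  rcases le_total b a with hba | hab
  · simpa only [max_eq_left hba] using pow_add_pow_sub_two_mul_pow_le_of_le hb hba hc d
  · have h := pow_add_pow_sub_two_mul_pow_le_of_le ha hab (by linarith) d
    rw [max_eq_right hab, sub_sq_comm a b]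
    linarith

section Integrals

variable {Ω : Type*} [MeasurableSpace Ω] {μ : Measure Ω}

lemma integral_sub_sq_eq {f g : Ω → ℝ} (hf : MemLp f 2 μ) (hg : MemLp g 2 μ) :
    ∫ ω, (f ω - g ω) ^ 2 ∂μ
      = ∫ ω, f ω ^ 2 ∂μ + ∫ ω, g ω ^ 2 ∂μ - 2 * ∫ ω, f ω * g ω ∂μ := by
  have hexpand : ∀ ω, (f ω - g ω) ^ 2 = (f ω ^ 2 + g ω ^ 2) - 2 * (f ω * g ω) := fun ω => by ring
  have hfg : Integrable (fun ω => f ω * g ω) μ := hf.integrable_mul hg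
  simp_rw [hexpand]
  rw [integral_sub (hf.integrable_sq.fun_add hg.integrable_sq) (hfg.const_mul 2),
    integral_add hf.integrable_sq hg.integrable_sq, integral_const_mul]

lemma two_mul_abs_integral_mul_le {f g : Ω → ℝ} (hf : MemLp f 2 μ) (hg : MemLp g 2 μ) :
    2 * |∫ ω, f ω * g ω ∂μ| ≤ ∫ ω, f ω ^ 2 ∂μ + ∫ ω, g ω ^ 2 ∂μ := by
  have hpointwise : ∀ x y : ℝ, |2 * (x * y)| ≤ x ^ 2 + y ^ 2 := fun x y => by
    simpa [abs_mul, mul_assoc] using two_mul_le_add_sq |x| |y|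
  calc 2 * |∫ ω, f ω * g ω ∂μ| = |∫ ω, 2 * (f ω * g ω) ∂μ| := by
        rw [integral_const_mul, abs_mul, abs_two]
    _ ≤ ∫ ω, |2 * (f ω * g ω)| ∂μ := abs_integral_le_integral_abs
    _ ≤ ∫ ω, (f ω ^ 2 + g ω ^ 2) ∂μ :=
        integral_mono ((hf.integrable_mul hg).const_mul 2).abs
          (hf.integrable_sq.add hg.integrable_sq) fun ω => hpointwise (f ω) (g ω)
    _ = ∫ ω, f ω ^ 2 ∂μ + ∫ ω, g ω ^ 2 ∂μ := integral_add hf.integrable_sq hg.integrable_sq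

lemma ProbabilityTheory.iIndepFun.integral_fun_prod_comp_eq_pow {ι E Ω' : Type*} [Fintype ι]
    [MeasurableSpace E] [MeasurableSpace Ω'] {ν : Measure Ω'} {X : ι → Ω → E} {Y : Ω' → E}
    (hX : iIndepFun X μ) (hXY : ∀ i, IdentDistrib (X i) Y μ ν) {g : E → ℝ} (hg : Measurable g) :
    ∫ ω, ∏ i, g (X i ω) ∂μ = (∫ y, g (Y y) ∂ν) ^ Fintype.card ι := by
  have hfactor : ∀ i, ∫ ω, g (X i ω) ∂μ = ∫ y, g (Y y) ∂ν := fun i =>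
    ((hXY i).comp hg).integral_eq
  rw [hX.integral_fun_prod_comp (fun i => (hXY i).aemeasurable_fst)
      (fun _ => hg.aestronglyMeasurable), prod_congr rfl fun i _ => hfactor i, prod_const,
    card_univ]

end Integrals

/-- let `d ≥ 2` and let `(A₁,B₁), …, (A_d,B_d)` be i.i.d. copies of a pair
`(A,B)` of bounded real random variables.  With `m = max{E[A²], E[B²]}`,
`E[(∏ᵢ Aᵢ - ∏ᵢ Bᵢ)²] ≤ d²·m^(d-2)·(E[A²] - E[B²])² + 2d·m^(d-1)·E[(A-B)²]`. -/
theorem sq_diff_of_products_bound :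
    ∀ (d : ℕ), 2 ≤ d →
    ∀ (Ω : Type) (_ : MeasurableSpace Ω) (μ : Measure Ω), IsProbabilityMeasure μ →
    ∀ (A B : Ω → ℝ) (A' B' : Fin d → Ω → ℝ),
    Measurable A → Measurable B →
    (∀ i, Measurable (A' i)) → (∀ i, Measurable (B' i)) →
    -- boundedness
    (∃ M : ℝ, (∀ ω, |A ω| ≤ M ∧ |B ω| ≤ M) ∧ ∀ i ω, |A' i ω| ≤ M ∧ |B' i ω| ≤ M) →
    -- the pairs (A'_i, B'_i) are jointly independent ...
    iIndepFun
      (fun i ω => ((A' i ω, B' i ω) : ℝ × ℝ)) μ →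
    -- ... and each is a copy of the pair (A, B)
    (∀ i, μ.map (fun ω => ((A' i ω, B' i ω) : ℝ × ℝ))
        = μ.map (fun ω => ((A ω, B ω) : ℝ × ℝ))) →
    ∫ ω, ((∏ i, A' i ω) - (∏ i, B' i ω))^2 ∂μ
      ≤ (d:ℝ)^2 * (max (∫ ω, (A ω)^2 ∂μ) (∫ ω, (B ω)^2 ∂μ))^(d-2)
          * ((∫ ω, (A ω)^2 ∂μ) - (∫ ω, (B ω)^2 ∂μ))^2
        + 2 * d * (max (∫ ω, (A ω)^2 ∂μ) (∫ ω, (B ω)^2 ∂μ))^(d-1)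
          * ∫ ω, (A ω - B ω)^2 ∂μ := by
  intro d _ Ω _ μ _ A B A' B' hA hB hA' hB' ⟨M, hM, hM'⟩ hindep hcopy
  have memLp_top {f : Ω → ℝ} (hf : Measurable f) (hfM : ∀ ω, |f ω| ≤ M) : MemLp f ⊤ μ :=
    .of_bound hf.aestronglyMeasurable M (.of_forall hfM)
  have memLp_prod {f : Fin d → Ω → ℝ} (hf : ∀ i, MemLp (f i) ⊤ μ) :
      MemLp (fun ω => ∏ i, f i ω) 2 μ := by
    refine MemLp.mono_exponent ?_ le_top
    simpa using MemLp.prod' (s := univ) (p := fun _ => ⊤) fun i _ => hf i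
  have hiid {g : ℝ × ℝ → ℝ} (hg : Measurable g) :
      ∫ ω, ∏ i, g (A' i ω, B' i ω) ∂μ = (∫ ω, g (A ω, B ω) ∂μ) ^ d := by
    simpa using hindep.integral_fun_prod_comp_eq_pow
      (fun i => ⟨by fun_prop, by fun_prop, hcopy i⟩) hg
  have hA2 : MemLp A 2 μ := (memLp_top hA fun ω => (hM ω).1).mono_exponent le_top
  have hB2 : MemLp B 2 μ := (memLp_top hB fun ω => (hM ω).2).mono_exponent le_top
  rw [integral_sub_sq_eq (memLp_prod fun i => memLp_top (hA' i) fun ω => (hM' i ω).1)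
    (memLp_prod fun i => memLp_top (hB' i) fun ω => (hM' i ω).2)]
  simp_rw [← prod_pow, ← prod_mul_distrib]
  rw [hiid (g := fun p => p.1 ^ 2) (by fun_prop), hiid (g := fun p => p.2 ^ 2) (by fun_prop),
    hiid (g := fun p => p.1 * p.2) (by fun_prop), integral_sub_sq_eq hA2 hB2]
  exact pow_add_pow_sub_two_mul_pow_le (integral_nonneg fun _ => sq_nonneg _)
    (integral_nonneg fun _ => sq_nonneg _) (two_mul_abs_integral_mul_le hA2 hB2) d
end

section
/- For every real m > 0, all real a, b with 0 ≤ a ≤ m and 0 ≤ b ≤ m, and every integer d ≥ 2: a^d + b^d ≤ d²·m^{d−2}·(a−b)² + 2·((a+b)/2)^d. -/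
lemma aux_pow_sub_pow : ∀ n : ℕ, ∀ x y : ℝ, 0 ≤ y → y ≤ x →
    x ^ (n + 1) - y ^ (n + 1) ≤ (n + 1 : ℝ) * x ^ n * (x - y) := by
  intro n
  induction n with
  | zero => intro x y hy hxy; simp
  | succ n ih =>
    intro x y hy hxy
    have hx : 0 ≤ x := le_trans hy hxy
    have h1 := ih x y hy hxy
    have h2 : y ^ (n + 1) ≤ x ^ (n + 1) := pow_le_pow_left₀ hy hxy (n + 1)
    have h3 : x ^ (n + 2) - y ^ (n + 2) =
        x * (x ^ (n + 1) - y ^ (n + 1)) + y ^ (n + 1) * (x - y) := by ring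
    have h4 : x * (x ^ (n + 1) - y ^ (n + 1)) ≤ x * ((n + 1 : ℝ) * x ^ n * (x - y)) :=
      mul_le_mul_of_nonneg_left h1 hx
    have h5 : y ^ (n + 1) * (x - y) ≤ x ^ (n + 1) * (x - y) :=
      mul_le_mul_of_nonneg_right h2 (by linarith)
    have hxp : x * ((n + 1 : ℝ) * x ^ n * (x - y)) = (n + 1 : ℝ) * x ^ (n + 1) * (x - y) := by
      ring
    push_cast
    nlinarith [h3, h4, h5, hxp]

lemma aux_second_diff : ∀ n : ℕ, ∀ c h : ℝ, 0 ≤ h → h ≤ c →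
    (c + h) ^ (n + 2) + (c - h) ^ (n + 2) ≤
      2 * c ^ (n + 2) + ((n : ℝ) + 2) * ((n : ℝ) + 1) * h ^ 2 * (c + h) ^ n := by
  intro n
  induction n with
  | zero =>
    intro c h hh hhc
    simp only [pow_succ, pow_zero]
    push_cast
    nlinarith
  | succ n ih =>
    intro c h hh hhc
    have hc : 0 ≤ c := le_trans hh hhc
    have hch : (0:ℝ) ≤ c - h := by linarith
    have hch' : c - h ≤ c + h := by linarith
    have h1 := ih c h hh hhc
    have h2 := aux_pow_sub_pow (n + 1) (c + h) (c - h) hch hch'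
    -- key algebra
    have h3 : (c + h) ^ (n + 3) + (c - h) ^ (n + 3) =
        c * ((c + h) ^ (n + 2) + (c - h) ^ (n + 2)) +
        h * ((c + h) ^ (n + 2) - (c - h) ^ (n + 2)) := by ring
    have h4 : c * ((c + h) ^ (n + 2) + (c - h) ^ (n + 2)) ≤
        c * (2 * c ^ (n + 2) + ((n : ℝ) + 2) * ((n : ℝ) + 1) * h ^ 2 * (c + h) ^ n) :=
      mul_le_mul_of_nonneg_left h1 hc
    have h2' : (c + h) ^ (n + 2) - (c - h) ^ (n + 2) ≤
        ((n : ℝ) + 2) * (c + h) ^ (n + 1) * (2 * h) := by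
      have := h2
      push_cast at this ⊢
      convert this using 2 <;> ring
    have h5 : h * ((c + h) ^ (n + 2) - (c - h) ^ (n + 2)) ≤
        h * (((n : ℝ) + 2) * (c + h) ^ (n + 1) * (2 * h)) :=
      mul_le_mul_of_nonneg_left h2' hh
    have hpow : (0:ℝ) ≤ (c + h) ^ n := pow_nonneg (by linarith) n
    have h6 : c * (((n : ℝ) + 2) * ((n : ℝ) + 1) * h ^ 2 * (c + h) ^ n) ≤
        (c + h) * (((n : ℝ) + 2) * ((n : ℝ) + 1) * h ^ 2 * (c + h) ^ n) := by
      apply mul_le_mul_of_nonneg_right (by linarith)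
      positivity
    have h7 : (c + h) * (((n : ℝ) + 2) * ((n : ℝ) + 1) * h ^ 2 * (c + h) ^ n) =
        ((n : ℝ) + 2) * ((n : ℝ) + 1) * h ^ 2 * (c + h) ^ (n + 1) := by ring
    have h8 : h * (((n : ℝ) + 2) * (c + h) ^ (n + 1) * (2 * h)) =
        2 * ((n : ℝ) + 2) * h ^ 2 * (c + h) ^ (n + 1) := by ring
    have goal' : (c + h) ^ (n + 3) + (c - h) ^ (n + 3) ≤
        2 * c ^ (n + 3) + ((n : ℝ) + 3) * ((n : ℝ) + 2) * h ^ 2 * (c + h) ^ (n + 1) := by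
      have hcc : c * (2 * c ^ (n + 2)) = 2 * c ^ (n + 3) := by ring
      nlinarith [h3, h4, h5, h6, h7, h8]
    push_cast
    convert goal' using 2 <;> push_cast <;> ring

lemma key : ∀ m : ℝ, 0 < m → ∀ a b : ℝ, 0 ≤ a → a ≤ m → 0 ≤ b → b ≤ m → b ≤ a →
    ∀ n : ℕ,
      a ^ (n + 2) + b ^ (n + 2) ≤
        ((n : ℝ) + 2) ^ 2 * m ^ n * (a - b) ^ 2 + 2 * ((a + b) / 2) ^ (n + 2) := by
  intro m hm a b ha ham hb hbm hba n
  have h := aux_second_diff n ((a + b) / 2) ((a - b) / 2) (by linarith) (by linarith)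
  have e1 : (a + b) / 2 + (a - b) / 2 = a := by ring
  have e2 : (a + b) / 2 - (a - b) / 2 = b := by ring
  rw [e1, e2] at h
  have hmn : a ^ n ≤ m ^ n := pow_le_pow_left₀ ha ham n
  have hmn0 : (0:ℝ) ≤ a ^ n := pow_nonneg ha n
  have hsq : (0:ℝ) ≤ (a - b) ^ 2 := sq_nonneg _
  have hcoef : ((n : ℝ) + 2) * ((n : ℝ) + 1) * ((a - b) / 2) ^ 2 * a ^ n ≤
      ((n : ℝ) + 2) ^ 2 * m ^ n * (a - b) ^ 2 := by
    have h1 : ((n : ℝ) + 2) * ((n : ℝ) + 1) * ((a - b) / 2) ^ 2 * a ^ n ≤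
        ((n : ℝ) + 2) * ((n : ℝ) + 1) * ((a - b) / 2) ^ 2 * m ^ n := by
      apply mul_le_mul_of_nonneg_left hmn
      positivity
    have h2 : ((n : ℝ) + 2) * ((n : ℝ) + 1) * ((a - b) / 2) ^ 2 * m ^ n ≤
        ((n : ℝ) + 2) ^ 2 * m ^ n * (a - b) ^ 2 := by
      have hmn0' : (0:ℝ) ≤ m ^ n := pow_nonneg (le_of_lt hm) n
      have hn : (0:ℝ) ≤ (n:ℝ) := Nat.cast_nonneg n
      have hP : (0:ℝ) ≤ m ^ n * (a - b) ^ 2 := mul_nonneg hmn0' hsq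
      nlinarith [hP, mul_nonneg hn hP, mul_nonneg (mul_nonneg hn hn) hP]
    linarith
  linarith

/-- for every real `m > 0`, all `a, b ∈ [0, m]` and every integer `d ≥ 2`,
`a^d + b^d ≤ d²·m^(d-2)·(a-b)² + 2·((a+b)/2)^d`. -/
theorem pow_add_pow_le_taylor_bound :
    ∀ m : ℝ, 0 < m → ∀ a b : ℝ, 0 ≤ a → a ≤ m → 0 ≤ b → b ≤ m →
    ∀ d : ℕ, 2 ≤ d →
      a ^ d + b ^ d ≤ (d:ℝ)^2 * m^(d-2) * (a - b)^2 + 2 * ((a + b) / 2)^d := by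
  intro m hm a b ha ham hb hbm d hd
  obtain ⟨n, rfl⟩ : ∃ n, d = n + 2 := ⟨d - 2, (Nat.sub_add_cancel hd).symm⟩
  have hsub : n + 2 - 2 = n := by omega
  rw [hsub]
  have hcast : ((n + 2 : ℕ) : ℝ) = (n : ℝ) + 2 := by push_cast; ring
  rw [hcast]
  rcases le_total b a with hba | hab
  · exact key m hm a b ha ham hb hbm hba n
  · have h := key m hm b a hb hbm ha ham hab n
    have e1 : (b - a) ^ 2 = (a - b) ^ 2 := by ring
    have e2 : (b + a) / 2 = (a + b) / 2 := by ring
    rw [e1, e2] at h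
    linarith
end

section
/- There is a θ* > 0 such that for all θ with 0 < θ < θ* the following holds: for any probability space and any random variables X and Y on it taking values in [−1,1], E[|f(X) − f(Y)|] ≤ 3θ²·√(E[(X − Y)²]), where f(x) = (1−θ²x)/√(1−θ²x²). -/
/-!
For `θ² ≤ 1/6` the function `f x = (1 - θ² x) / √(1 - θ² x²)` has derivative
`θ² (x - 1) / (1 - θ² x²)^{3/2}`, bounded by `3θ²` on `[-1, 1]`, so `f` is `3θ²`-Lipschitz there.
Hence `E|f(X) - f(Y)| ≤ 3θ² E|X - Y|`, and `E|X - Y| ≤ √(E[(X - Y)²])` because the variance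
of `|X - Y|` is nonnegative.
-/

open MeasureTheory ProbabilityTheory

lemma hasDerivAt_one_sub_mul_div_sqrt {θ x : ℝ} (hx : 0 < 1 - θ ^ 2 * x ^ 2) :
    HasDerivAt (fun x => (1 - θ ^ 2 * x) / √(1 - θ ^ 2 * x ^ 2))
      (θ ^ 2 * (x - 1) / (√(1 - θ ^ 2 * x ^ 2) * (1 - θ ^ 2 * x ^ 2))) x := by
  have hnum : HasDerivAt (fun x => 1 - θ ^ 2 * x) (-θ ^ 2) x := by
    simpa using ((hasDerivAt_id x).const_mul (θ ^ 2)).const_sub 1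
  have hrad : HasDerivAt (fun x => 1 - θ ^ 2 * x ^ 2) (-(θ ^ 2 * (2 * x))) x := by
    simpa using (((hasDerivAt_id x).pow 2).const_mul (θ ^ 2)).const_sub 1
  have hsqrt_pos : 0 < √(1 - θ ^ 2 * x ^ 2) := Real.sqrt_pos.mpr hx
  refine (hnum.div (hrad.sqrt hx.ne') hsqrt_pos.ne').congr_deriv ?_
  have hsq : √(1 - θ ^ 2 * x ^ 2) ^ 2 = 1 - θ ^ 2 * x ^ 2 := Real.sq_sqrt hx.le
  field_simp
  linear_combination -θ ^ 2 * (x - θ ^ 2 * x ^ 2) * hsq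

lemma abs_deriv_one_sub_mul_div_sqrt_le {θ x : ℝ} (hθ : θ ^ 2 ≤ 1 / 6)
    (hx : x ∈ Set.Icc (-1 : ℝ) 1) :
    |θ ^ 2 * (x - 1) / (√(1 - θ ^ 2 * x ^ 2) * (1 - θ ^ 2 * x ^ 2))| ≤ 3 * θ ^ 2 := by
  obtain ⟨hx₁, hx₂⟩ := hx
  set u := 1 - θ ^ 2 * x ^ 2 with hu
  have hu_ge : 5 / 6 ≤ u := by nlinarith [sq_nonneg θ]
  -- `√u ≥ u` since `u ≤ 1`, so the denominator is at least `u² ≥ 25/36 > 2/3`.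
  have hsqrt_ge : u ≤ √u :=
    Real.le_sqrt_of_sq_le (by nlinarith [mul_nonneg (sq_nonneg θ) (sq_nonneg x)])
  have hden : 2 / 3 ≤ √u * u := by nlinarith
  have hnum : |θ ^ 2 * (x - 1)| ≤ 2 * θ ^ 2 := by
    rw [abs_mul, abs_of_nonneg (sq_nonneg θ), abs_of_nonpos (by linarith)]
    nlinarith [sq_nonneg θ]
  rw [abs_div, abs_of_pos (show 0 < √u * u by linarith), div_le_iff₀ (by linarith)]
  nlinarith [sq_nonneg θ]

lemma abs_one_sub_mul_div_sqrt_sub_le {θ x y : ℝ} (hθ : θ ^ 2 ≤ 1 / 6)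
    (hx : x ∈ Set.Icc (-1 : ℝ) 1) (hy : y ∈ Set.Icc (-1 : ℝ) 1) :
    |(1 - θ ^ 2 * x) / √(1 - θ ^ 2 * x ^ 2) - (1 - θ ^ 2 * y) / √(1 - θ ^ 2 * y ^ 2)|
      ≤ 3 * θ ^ 2 * |x - y| := by
  have hrad_pos : ∀ z ∈ Set.Icc (-1 : ℝ) 1, 0 < 1 - θ ^ 2 * z ^ 2 := fun z ⟨hz₁, hz₂⟩ => by
    nlinarith [sq_nonneg θ]
  exact (convex_Icc (-1 : ℝ) 1).norm_image_sub_le_of_norm_hasDerivWithin_le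
    (fun z hz => (hasDerivAt_one_sub_mul_div_sqrt (hrad_pos z hz)).hasDerivWithinAt)
    (fun z hz => abs_deriv_one_sub_mul_div_sqrt_le hθ hz) hy hx

lemma integral_abs_le_sqrt_integral_sq {Ω : Type*} [MeasurableSpace Ω] {μ : Measure Ω}
    [IsProbabilityMeasure μ] {g : Ω → ℝ} (hg : MemLp g 2 μ) :
    ∫ ω, |g ω| ∂μ ≤ √(∫ ω, g ω ^ 2 ∂μ) := by
  have hvar := variance_eq_sub hg.abs ▸ variance_nonneg (fun ω => |g ω|) μ
  simp only [Pi.pow_apply, Pi.abs_apply, sq_abs] at hvar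
  exact (le_abs_self _).trans (Real.abs_le_sqrt (by linarith))

/-- there is a `θ* > 0` such that for all `0 < θ < θ*` the following holds:
for any probability space and any random variables `X, Y` with values in `[-1,1]`,
`E[|f(X) - f(Y)|] ≤ 3θ²·√(E[(X-Y)²])`, where `f(x) = (1-θ²x)/√(1-θ²x²)`. -/
theorem expectation_f_diff_bound :
    ∃ θstar : ℝ, 0 < θstar ∧ ∀ θ : ℝ, 0 < θ → θ < θstar →
    ∀ (Ω : Type) (_ : MeasurableSpace Ω) (μ : Measure Ω), IsProbabilityMeasure μ →
    ∀ X Y : Ω → ℝ, Measurable X → Measurable Y →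
    (∀ ω, X ω ∈ Set.Icc (-1 : ℝ) 1) → (∀ ω, Y ω ∈ Set.Icc (-1 : ℝ) 1) →
    ∫ ω, |(1 - θ^2 * X ω) / Real.sqrt (1 - θ^2 * (X ω)^2)
          - (1 - θ^2 * Y ω) / Real.sqrt (1 - θ^2 * (Y ω)^2)| ∂μ
      ≤ 3 * θ^2 * Real.sqrt (∫ ω, (X ω - Y ω)^2 ∂μ) := by
  refine ⟨1 / 3, by norm_num, fun θ _ hθ Ω _ μ _ X Y hX hY hXI hYI => ?_⟩
  have hθsq : θ ^ 2 ≤ 1 / 6 := by nlinarith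
  have hdiff : MemLp (fun ω => X ω - Y ω) 2 μ :=
    MemLp.of_bound (hX.sub hY).aestronglyMeasurable 2 <| ae_of_all _ fun ω => by
      obtain ⟨hX₁, hX₂⟩ := hXI ω
      obtain ⟨hY₁, hY₂⟩ := hYI ω
      rw [Real.norm_eq_abs, abs_le]
      constructor <;> linarith
  calc _ ≤ ∫ ω, 3 * θ ^ 2 * |X ω - Y ω| ∂μ :=
        integral_mono_of_nonneg (ae_of_all _ fun _ => abs_nonneg _)
          ((hdiff.integrable one_le_two).abs.const_mul _)
          (ae_of_all _ fun ω => abs_one_sub_mul_div_sqrt_sub_le hθsq (hXI ω) (hYI ω))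
    _ = 3 * θ ^ 2 * ∫ ω, |X ω - Y ω| ∂μ := integral_const_mul _ _
    _ ≤ _ := by gcongr; exact integral_abs_le_sqrt_integral_sq hdiff
end
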